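/- Let N = 2M+1, M ≥ 1, and K₂ = T_R T_θ with R_0 = R, so T_R = diag(1,-1,-1,-1/2,-1/2,...,-1/M,-1/M). Then K₂K₂^T = (N/2)·diag(2,1,1,1/4,1/4,...,1/M²,1/M²), hence the 2-norm condition number of K₂ equals √2·M, independently of R. -/

import Mathlib

open Matrix
open scoped Matrix.Norms.L2Operator

noncomputable section

/-- Equispaced collocation angles `θ_j = 2π(j-1)/N` (0-based: `θ_j = 2πj/N`). -/
def theta (N : ℕ) (j : Fin N) : ℝ := 2 * Real.pi * j / N

/-- The trigonometric collocation matrix `T_θ ∈ ℝ^{(2M+1)×(2M+1)}`: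
row `1` (index 0) is all ones, row `2k` is `cos(kθ_j)`, row `2k+1` is `sin(kθ_j)`.
In 0-based indexing, the frequency of row `i ≥ 1` is `k = (i+1)/2`. -/
def Ttheta (M : ℕ) : Matrix (Fin (2*M+1)) (Fin (2*M+1)) ℝ := fun i j =>
  if i.val = 0 then 1
  else if i.val % 2 = 1 then Real.cos ((((i.val+1)/2 : ℕ) : ℝ) * theta (2*M+1) j)
  else Real.sin ((((i.val+1)/2 : ℕ) : ℝ) * theta (2*M+1) j)

/-- The diagonal matrix `T_R = diag(1, -(R/R₀), -(R/R₀), …, -(1/M)(R/R₀)^M, -(1/M)(R/R₀)^M)`: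
the diagonal entry at (0-based) index `i ≥ 1` is `-(1/k)(R/R₀)^k` with `k = (i+1)/2`. -/
def TR (M : ℕ) (R R₀ : ℝ) : Matrix (Fin (2*M+1)) (Fin (2*M+1)) ℝ :=
  Matrix.diagonal (fun i : Fin (2*M+1) =>
    if i.val = 0 then 1
    else -(1 / (((i.val+1)/2 : ℕ) : ℝ)) * (R / R₀) ^ ((i.val+1)/2 : ℕ))

/-!
Writing row `i` of `T_θ` as `cos(kθ - φ)` with `k = ⌊(i+1)/2⌋ ≤ M` and `φ ∈ {0, π/2}`, the rows
are orthogonal with squared norms `N` (the constant row) and `N/2`: a product of two such cosines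
is a sum of cosines of frequencies `k ± k'`, and `|k ± k'| < N`, so the discrete orthogonality of
`e^{i a θ_j}` applies. With `R₀ = R` the matrix `T_R` is `diag(1, -1, -1, …, -1/M, -1/M)`, so
`K₂K₂ᵀ = T_R (T_θT_θᵀ) T_R` is diagonal. If `A Aᴴ = diag(v)` then `‖A‖² = max |v|` and
`‖A⁻¹‖² = ‖(A Aᴴ)⁻¹‖ = 1 / min |v|`, so `cond₂(K₂) = √(N / (N / (2M²))) = √2·M`.
-/

theorem sum_exp_int_mul_theta_mul_I {N : ℕ} {k : ℤ} (hk : |k| < N) :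
    ∑ j : Fin N, Complex.exp (↑(k * theta N j) * Complex.I) = if k = 0 then (N : ℂ) else 0 := by
  split_ifs with hk0
  · simp [hk0]
  have hN : N ≠ 0 := by rintro rfl; exact absurd hk (by simp)
  have hζ := Complex.isPrimitiveRoot_exp N hN
  set z := Complex.exp (2 * Real.pi * Complex.I / N) ^ k with hz
  have hpow (j : Fin N) : Complex.exp (↑(k * theta N j) * Complex.I) = z ^ (j : ℕ) := by
    rw [hz, ← Complex.exp_int_mul, ← Complex.exp_nat_mul, theta]
    push_cast
    ring_nf
  have hzN : z ^ N = 1 := by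
    rw [← zpow_natCast, ← _root_.zpow_mul, mul_comm k, _root_.zpow_mul, zpow_natCast,
      hζ.pow_eq_one, _root_.one_zpow]
  have hz1 : z ≠ 1 := fun h =>
    hk0 (Int.eq_zero_of_abs_lt_dvd ((hζ.zpow_eq_one_iff_dvd k).mp h) hk)
  rw [Finset.sum_congr rfl fun j _ => hpow j, Fin.sum_univ_eq_sum_range (z ^ ·),
    geom_sum_eq hz1, hzN, sub_self, zero_div]

theorem sum_cos_int_mul_theta_sub {N : ℕ} {k : ℤ} (hk : |k| < N) (φ : ℝ) :
    ∑ j : Fin N, Real.cos (k * theta N j - φ) = if k = 0 then N * Real.cos φ else 0 := by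
  have hexp := sum_exp_int_mul_theta_mul_I hk
  have hcos : ∑ j : Fin N, Real.cos (k * theta N j) = if k = 0 then (N : ℝ) else 0 := by
    simpa [← Complex.exp_ofReal_mul_I_re, apply_ite Complex.re] using congrArg Complex.re hexp
  have hsin : ∑ j : Fin N, Real.sin (k * theta N j) = 0 := by
    simpa [← Complex.exp_ofReal_mul_I_im, apply_ite Complex.im] using congrArg Complex.im hexp
  simp only [Real.cos_sub, ← Finset.sum_mul, Finset.sum_add_distrib, hcos, hsin]
  split_ifs <;> ring

theorem sum_cos_sub_mul_cos_sub {N k k' : ℕ} (h : k + k' < N) (φ ψ : ℝ) :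
    ∑ j : Fin N, Real.cos (k * theta N j - φ) * Real.cos (k' * theta N j - ψ) =
      N / 2 * ((if k = k' then Real.cos (φ - ψ) else 0) +
        (if k + k' = 0 then Real.cos (φ + ψ) else 0)) := by
  have hprod_sum (A B : ℝ) :
      Real.cos A * Real.cos B = (Real.cos (A - B) + Real.cos (A + B)) / 2 := by
    rw [Real.cos_sub, Real.cos_add]; ring
  have hprod (j : Fin N) : Real.cos (k * theta N j - φ) * Real.cos (k' * theta N j - ψ) =
      (Real.cos (((k - k' : ℤ) : ℝ) * theta N j - (φ - ψ)) +
        Real.cos (((k + k' : ℤ) : ℝ) * theta N j - (φ + ψ))) / 2 := by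
    rw [hprod_sum]
    push_cast
    ring_nf
  have hdiff : |(k - k' : ℤ)| < N := by rw [abs_lt]; omega
  have hsum : |(k + k' : ℤ)| < N := by rw [abs_lt]; omega
  rw [Finset.sum_congr rfl fun j _ => hprod j, ← Finset.sum_div, Finset.sum_add_distrib,
    sum_cos_int_mul_theta_sub hdiff, sum_cos_int_mul_theta_sub hsum]
  simp only [sub_eq_zero, Nat.cast_inj, ← Nat.cast_add, Nat.cast_eq_zero]
  split_ifs <;> ring

/-- Row `i` of `Ttheta` is `cos(kθ - trigRowPhase i)` with `k = (i+1)/2`; the constant row is the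
case `k = 0`, and the sine rows have phase `π/2`. -/
def trigRowPhase (i : ℕ) : ℝ := if i % 2 = 0 ∧ i ≠ 0 then Real.pi / 2 else 0

theorem Ttheta_apply (M : ℕ) (i j : Fin (2*M+1)) :
    Ttheta M i j = Real.cos ((((i.val+1)/2 : ℕ) : ℝ) * theta (2*M+1) j - trigRowPhase i) := by
  unfold Ttheta trigRowPhase
  split_ifs <;> first | omega | simp_all [Real.cos_sub_pi_div_two]

theorem trigRowPhase_gram_coeff (i i' : ℕ) :
    ((if (i+1)/2 = (i'+1)/2 then Real.cos (trigRowPhase i - trigRowPhase i') else 0) +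
      (if (i+1)/2 + (i'+1)/2 = 0 then Real.cos (trigRowPhase i + trigRowPhase i') else 0)) =
      if i = i' then (if i = 0 then 2 else 1) else 0 := by
  unfold trigRowPhase
  split_ifs <;> first | omega | norm_num

theorem Ttheta_mul_transpose (M : ℕ) :
    Ttheta M * (Ttheta M)ᵀ =
      (((2*M+1 : ℕ) : ℝ) / 2) • diagonal (fun i : Fin (2*M+1) => if i.val = 0 then 2 else 1) := by
  ext i i'
  simp only [mul_apply, transpose_apply, Ttheta_apply, Matrix.smul_apply, diagonal_apply,
    smul_eq_mul]
  rw [sum_cos_sub_mul_cos_sub (by omega), trigRowPhase_gram_coeff]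
  simp only [Fin.val_inj]

def gramWeight (i : ℕ) : ℝ := if i = 0 then 2 else (1 / (((i+1)/2 : ℕ) : ℝ)) ^ 2

theorem gramWeight_zero : gramWeight 0 = 2 := if_pos rfl

theorem gramWeight_two_mul {M : ℕ} (hM : M ≠ 0) : gramWeight (2 * M) = (1 / (M : ℝ)) ^ 2 := by
  rw [gramWeight, if_neg (by omega), show (2 * M + 1) / 2 = M by omega]

theorem gramWeight_pos (i : ℕ) : 0 < gramWeight i := by
  unfold gramWeight
  split_ifs
  · norm_num
  · have : 0 < (i + 1) / 2 := by omega
    positivity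

theorem gramWeight_le_two (i : ℕ) : gramWeight i ≤ 2 := by
  unfold gramWeight
  split_ifs
  · rfl
  · have hk : (1 : ℝ) ≤ ((i + 1) / 2 : ℕ) := by exact_mod_cast (by omega : 1 ≤ (i + 1) / 2)
    have : (1 / (((i + 1) / 2 : ℕ) : ℝ)) ^ 2 ≤ 1 :=
      pow_le_one₀ (by positivity) (div_le_one_of_le₀ hk (by positivity))
    linarith

theorem inv_sq_le_gramWeight {M i : ℕ} (hM : 1 ≤ M) (hi : i ≤ 2 * M) :
    (1 / (M : ℝ)) ^ 2 ≤ gramWeight i := by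
  have hM' : (1 : ℝ) ≤ M := by exact_mod_cast hM
  unfold gramWeight
  split_ifs
  · have : (1 / (M : ℝ)) ^ 2 ≤ 1 :=
      pow_le_one₀ (by positivity) (div_le_one_of_le₀ hM' (by positivity))
    linarith
  · have hk : 1 ≤ (i + 1) / 2 := by omega
    have hkM : (i + 1) / 2 ≤ M := by omega
    gcongr

theorem TR_self_eq_diagonal (M : ℕ) {R : ℝ} (hR : R ≠ 0) :
    TR M R R = diagonal (fun i : Fin (2*M+1) =>
      if i.val = 0 then 1 else -(1 / (((i.val+1)/2 : ℕ) : ℝ))) := by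
  simp only [TR, div_self hR, one_pow, mul_one]

theorem TR_self_mul_Ttheta_mul_transpose (M : ℕ) {R : ℝ} (hR : R ≠ 0) :
    TR M R R * Ttheta M * (TR M R R * Ttheta M)ᵀ =
      (((2*M+1 : ℕ) : ℝ) / 2) • diagonal (fun i : Fin (2*M+1) => gramWeight i) := by
  rw [TR_self_eq_diagonal M hR, transpose_mul, diagonal_transpose, Matrix.mul_assoc,
    ← Matrix.mul_assoc (Ttheta M), Ttheta_mul_transpose, Matrix.smul_mul, Matrix.mul_smul,
    diagonal_mul_diagonal, diagonal_mul_diagonal]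
  congr 2
  funext i
  unfold gramWeight
  split_ifs <;> ring

theorem pi_norm_eq_of_forall_le {n E : Type*} [Fintype n] [SeminormedAddCommGroup E]
    {v : n → E} {i₀ : n} (h : ∀ i, ‖v i‖ ≤ ‖v i₀‖) : ‖v‖ = ‖v i₀‖ :=
  le_antisymm ((pi_norm_le_iff_of_nonneg (norm_nonneg _)).2 h) (norm_le_pi_norm v i₀)

section OrthogonalRows

variable {𝕜 n : Type*} [RCLike 𝕜] [Fintype n] [DecidableEq n]

theorem l2_opNorm_mul_self_eq_l2_opNorm_mul_conjTranspose (A : Matrix n n 𝕜) :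
    ‖A‖ * ‖A‖ = ‖A * Aᴴ‖ := by
  rw [← l2_opNorm_conjTranspose A, ← l2_opNorm_conjTranspose_mul_self,
    conjTranspose_conjTranspose]

theorem l2_opNorm_mul_l2_opNorm_inv_of_mul_conjTranspose_eq_diagonal {A : Matrix n n 𝕜}
    {v : n → 𝕜} (hA : A * Aᴴ = diagonal v) (hv : ∀ i, v i ≠ 0) {iMax iMin : n}
    (hmax : ∀ i, ‖v i‖ ≤ ‖v iMax‖) (hmin : ∀ i, ‖v iMin‖ ≤ ‖v i‖) :
    ‖A‖ * ‖A⁻¹‖ = √(‖v iMax‖ / ‖v iMin‖) := by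
  have hA_sq : ‖A‖ * ‖A‖ = ‖v iMax‖ := by
    rw [l2_opNorm_mul_self_eq_l2_opNorm_mul_conjTranspose, hA, l2_opNorm_diagonal,
      pi_norm_eq_of_forall_le hmax]
  have hdiag_inv : (diagonal v)⁻¹ = diagonal v⁻¹ := by
    refine inv_eq_left_inv ?_
    rw [diagonal_mul_diagonal, ← diagonal_one]
    exact congrArg diagonal (funext fun i => inv_mul_cancel₀ (hv i))
  have hinv_max (i : n) : ‖v⁻¹ i‖ ≤ ‖v⁻¹ iMin‖ := by
    simp only [Pi.inv_apply, norm_inv]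
    exact inv_anti₀ (norm_pos_iff.2 (hv iMin)) (hmin i)
  -- `A⁻¹ᴴ A⁻¹ = (A Aᴴ)⁻¹` holds for every square matrix, invertible or not.
  have hAinv_sq : ‖A⁻¹‖ * ‖A⁻¹‖ = ‖v iMin‖⁻¹ := by
    rw [← l2_opNorm_conjTranspose_mul_self, conjTranspose_nonsing_inv, ← Matrix.mul_inv_rev, hA,
      hdiag_inv, l2_opNorm_diagonal, pi_norm_eq_of_forall_le hinv_max, Pi.inv_apply, norm_inv]
  rw [← Real.sqrt_mul_self (norm_nonneg A), ← Real.sqrt_mul_self (norm_nonneg A⁻¹), hA_sq,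
    hAinv_sq, ← Real.sqrt_mul (norm_nonneg _), div_eq_mul_inv]

end OrthogonalRows

/-- For `K₂ = T_R T_θ` with `R₀ = R`:
`K₂K₂ᵀ = (N/2)·diag(2, 1, 1, 1/4, 1/4, …, 1/M², 1/M²)`, and hence
`cond₂(K₂) = √2·M`, independently of `R`. -/
theorem K2_mul_transpose_and_cond (M : ℕ) (hM : 1 ≤ M) (R : ℝ) (hR : 0 < R) :
    TR M R R * Ttheta M * (TR M R R * Ttheta M)ᵀ =
      (((2*M+1 : ℕ) : ℝ) / 2) •
        Matrix.diagonal (fun i : Fin (2*M+1) =>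
          if i.val = 0 then 2 else (1 / (((i.val+1)/2 : ℕ) : ℝ)) ^ 2) ∧
    ‖TR M R R * Ttheta M‖ * ‖(TR M R R * Ttheta M)⁻¹‖ = Real.sqrt 2 * M := by
  have hgram := TR_self_mul_Ttheta_mul_transpose M hR.ne'
  refine ⟨hgram, ?_⟩
  set c : ℝ := ((2*M+1 : ℕ) : ℝ) / 2
  have hc : 0 < c := by positivity
  have hK : TR M R R * Ttheta M * (TR M R R * Ttheta M)ᴴ =
      diagonal (fun i : Fin (2*M+1) => c * gramWeight i) := by
    rw [conjTranspose_eq_transpose_of_trivial, hgram, ← diagonal_smul]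
    rfl
  have hpos (i : ℕ) : 0 < c * gramWeight i := mul_pos hc (gramWeight_pos i)
  have hnorm (i : ℕ) : ‖c * gramWeight i‖ = c * gramWeight i := Real.norm_of_nonneg (hpos i).le
  have hmax (i : Fin (2*M+1)) : ‖c * gramWeight i‖ ≤ ‖c * gramWeight (0 : Fin (2*M+1))‖ := by
    rw [hnorm, hnorm, Fin.val_zero, gramWeight_zero]
    gcongr
    exact gramWeight_le_two i
  have hmin (i : Fin (2*M+1)) : ‖c * gramWeight (Fin.last (2*M))‖ ≤ ‖c * gramWeight i‖ := by
    rw [hnorm, hnorm, Fin.val_last, gramWeight_two_mul (by omega)]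
    gcongr
    exact inv_sq_le_gramWeight hM i.is_le
  rw [l2_opNorm_mul_l2_opNorm_inv_of_mul_conjTranspose_eq_diagonal hK (fun i => (hpos i).ne')
      hmax hmin, hnorm, hnorm, mul_div_mul_left _ _ hc.ne', Fin.val_zero, gramWeight_zero,
    Fin.val_last, gramWeight_two_mul (by omega), one_div, inv_pow, div_inv_eq_mul,
    Real.sqrt_mul zero_le_two, Real.sqrt_sq M.cast_nonneg]
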